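/- arXiv:1101.1844 — 3 statements merged into one kernel-verified Lean document; each statement's English description precedes it below -/
import Mathlib

section
/- Let A be a ℤ₂-graded commutative algebra with odd derivation Q satisfying Q² = 0, and define [f,g]_Q := (-1)^{|f|} Q(f)g + f Q(g). Then the graded Jacobi identity holds: (-1)^{(|f|+1)(|h|+1)}[f,[g,h]_Q]_Q + (-1)^{(|g|+1)(|f|+1)}[g,[h,f]_Q]_Q + (-1)^{(|h|+1)(|g|+1)}[h,[f,g]_Q]_Q = 0 for all homogeneous f, g, h. -/
/-!
Because `Q² = 0`, the Leibniz rule gives `Q (f * Q x) = Q f * Q x`, so each double bracket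
`[f, [g, h]_Q]_Q` is, up to sign, `Q f * Q g * h ± Q f * g * Q h`. Graded commutativity turns the
term `Q g * h * Q f` of `[g, [h, f]_Q]_Q` into `± Q f * Q g * h`, and the Koszul signs make this
pair cancel; the six terms of the Jacobiator cancel in three such cyclically permuted pairs.
-/

/-- The derived odd bracket `[f,g]_Q = (-1)^{|f|} Q(f·g)` of a homological odd
derivation `Q`, for `f` homogeneous of parity `i`. -/
def brQ {A : Type*} [Ring A] [Algebra ℝ A] (Q : A → A) (i : ZMod 2) (f g : A) : A :=
  ((-1 : ℝ) ^ i.val) • Q (f * g)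

theorem jacobi_sign_sum_eq_zero {R : Type*} [CommRing R] (i j k : ZMod 2) :
    (-1 : R) ^ ((i.val + 1) * (k.val + 1)) * (-1) ^ (i.val + j.val)
      + (-1) ^ ((j.val + 1) * (i.val + 1))
        * ((-1) ^ j.val * (-1) ^ ((i + 1).val * ((j + 1).val + k.val))) = 0 := by
  have h01 : ∀ x : ZMod 2, x = 0 ∨ x = 1 := by decide
  rcases h01 i with rfl | rfl <;> rcases h01 j with rfl | rfl <;> rcases h01 k with rfl | rfl <;>
    simp only [ZMod.val_zero, ZMod.val_one, show ((1 : ZMod 2) + 1).val = 0 from rfl, zero_add] <;>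
    norm_num

section

variable {R A : Type*} [CommRing R] [Ring A] [Algebra R A] {𝒜 : ZMod 2 → Submodule R A}

theorem mul_mul_cycle_of_mem
    (hscomm : ∀ (i j : ZMod 2) (f g : A), f ∈ 𝒜 i → g ∈ 𝒜 j →
      f * g = ((-1 : R) ^ (i.val * j.val)) • (g * f))
    {p q r : ZMod 2} {x y z : A} (hx : x ∈ 𝒜 p) (hy : y ∈ 𝒜 q) (hz : z ∈ 𝒜 r) :
    y * (z * x) = ((-1 : R) ^ (p.val * (q.val + r.val))) • (x * (y * z)) := by
  rw [hscomm r p z x hz hx, mul_smul_comm, ← mul_assoc, hscomm q p y x hy hx, smul_mul_assoc,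
    smul_smul, ← pow_add, mul_assoc, Nat.mul_comm r.val, Nat.mul_comm q.val, ← Nat.mul_add,
    Nat.add_comm]

theorem apply_mul_apply {Q : A → A}
    (hQleib : ∀ (i : ZMod 2) (f g : A), f ∈ 𝒜 i →
      Q (f * g) = Q f * g + ((-1 : R) ^ i.val) • (f * Q g))
    (hQ2 : ∀ f : A, Q (Q f) = 0) {i : ZMod 2} {f : A} (hf : f ∈ 𝒜 i) (x : A) :
    Q (f * Q x) = Q f * Q x := by
  rw [hQleib i f _ hf, hQ2, mul_zero, smul_zero, add_zero]

theorem jacobi_cyclic_pair_cancel {Q : A → A}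
    (hscomm : ∀ (i j : ZMod 2) (f g : A), f ∈ 𝒜 i → g ∈ 𝒜 j →
      f * g = ((-1 : R) ^ (i.val * j.val)) • (g * f))
    (hQodd : ∀ (i : ZMod 2) (f : A), f ∈ 𝒜 i → Q f ∈ 𝒜 (i + 1))
    {i j k : ZMod 2} {f g h : A} (hf : f ∈ 𝒜 i) (hg : g ∈ 𝒜 j) (hh : h ∈ 𝒜 k) :
    (-1 : R) ^ ((i.val + 1) * (k.val + 1)) • (-1 : R) ^ (i.val + j.val) • (Q f * (Q g * h))
      + (-1 : R) ^ ((j.val + 1) * (i.val + 1)) • (-1 : R) ^ j.val • (Q g * (h * Q f)) = 0 := by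
  rw [mul_mul_cycle_of_mem hscomm (hQodd i f hf) (hQodd j g hg) hh]
  simp only [smul_smul, ← add_smul]
  rw [jacobi_sign_sum_eq_zero, zero_smul]

end

theorem brQ_brQ_eq {A : Type*} [Ring A] [Algebra ℝ A] {𝒜 : ZMod 2 → Submodule ℝ A}
    {Q : A → A}
    (hQsmul : ∀ (r : ℝ) (f : A), Q (r • f) = r • Q f)
    (hQleib : ∀ (i : ZMod 2) (f g : A), f ∈ 𝒜 i →
      Q (f * g) = Q f * g + ((-1 : ℝ) ^ i.val) • (f * Q g))
    (hQ2 : ∀ f : A, Q (Q f) = 0) {i j : ZMod 2} {f g : A} (hf : f ∈ 𝒜 i) (hg : g ∈ 𝒜 j)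
    (h : A) :
    brQ Q i f (brQ Q j g h) =
      (-1 : ℝ) ^ (i.val + j.val) • (Q f * (Q g * h)) + (-1 : ℝ) ^ i.val • (Q f * (g * Q h)) := by
  have hsq : (-1 : ℝ) ^ j.val * (-1) ^ j.val = 1 := by
    rw [← mul_pow, neg_one_mul, neg_neg, one_pow]
  rw [brQ, brQ, mul_smul_comm, hQsmul, apply_mul_apply hQleib hQ2 hf, hQleib j g h hg, mul_add,
    mul_smul_comm]
  simp only [smul_add, smul_smul, hsq, mul_one, pow_add]

theorem bracket_jacobi_general
    {A : Type*} [Ring A] [Algebra ℝ A]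
    (𝒜 : ZMod 2 → Submodule ℝ A)
    (hscomm : ∀ (i j : ZMod 2) (f g : A), f ∈ 𝒜 i → g ∈ 𝒜 j →
      f * g = ((-1 : ℝ) ^ (i.val * j.val)) • (g * f))
    (Q : A → A)
    (hQsmul : ∀ (r : ℝ) (f : A), Q (r • f) = r • Q f)
    (hQodd : ∀ (i : ZMod 2) (f : A), f ∈ 𝒜 i → Q f ∈ 𝒜 (i + 1))
    (hQleib : ∀ (i : ZMod 2) (f g : A), f ∈ 𝒜 i →
      Q (f * g) = Q f * g + ((-1 : ℝ) ^ i.val) • (f * Q g))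
    (hQ2 : ∀ f : A, Q (Q f) = 0) :
    ∀ (i j k : ZMod 2) (f g h : A), f ∈ 𝒜 i → g ∈ 𝒜 j → h ∈ 𝒜 k →
      ((-1 : ℝ) ^ ((i.val + 1) * (k.val + 1))) • brQ Q i f (brQ Q j g h)
        + ((-1 : ℝ) ^ ((j.val + 1) * (i.val + 1))) • brQ Q j g (brQ Q k h f)
        + ((-1 : ℝ) ^ ((k.val + 1) * (j.val + 1))) • brQ Q k h (brQ Q i f g) = 0 := by
  intro i j k f g h hf hg hh
  rw [brQ_brQ_eq hQsmul hQleib hQ2 hf hg, brQ_brQ_eq hQsmul hQleib hQ2 hg hh,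
    brQ_brQ_eq hQsmul hQleib hQ2 hh hf]
  linear_combination (norm := module) jacobi_cyclic_pair_cancel hscomm hQodd hf hg hh
    + jacobi_cyclic_pair_cancel hscomm hQodd hg hh hf
    + jacobi_cyclic_pair_cancel hscomm hQodd hh hf hg

/-- Graded Jacobi identity for the derived bracket. -/
theorem bracket_jacobi
    {A : Type*} [Ring A] [Algebra ℝ A]
    (𝒜 : ZMod 2 → Submodule ℝ A)
    (hone : (1 : A) ∈ 𝒜 0)
    (hmul : ∀ (i j : ZMod 2) (f g : A), f ∈ 𝒜 i → g ∈ 𝒜 j → f * g ∈ 𝒜 (i + j))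
    (hscomm : ∀ (i j : ZMod 2) (f g : A), f ∈ 𝒜 i → g ∈ 𝒜 j →
      f * g = ((-1 : ℝ) ^ (i.val * j.val)) • (g * f))
    (Q : A → A)
    (hQadd : ∀ f g : A, Q (f + g) = Q f + Q g)
    (hQsmul : ∀ (r : ℝ) (f : A), Q (r • f) = r • Q f)
    (hQodd : ∀ (i : ZMod 2) (f : A), f ∈ 𝒜 i → Q f ∈ 𝒜 (i + 1))
    (hQleib : ∀ (i : ZMod 2) (f g : A), f ∈ 𝒜 i →
      Q (f * g) = Q f * g + ((-1 : ℝ) ^ i.val) • (f * Q g))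
    (hQ2 : ∀ f : A, Q (Q f) = 0) :
    ∀ (i j k : ZMod 2) (f g h : A), f ∈ 𝒜 i → g ∈ 𝒜 j → h ∈ 𝒜 k →
      ((-1 : ℝ) ^ ((i.val + 1) * (k.val + 1))) • brQ Q i f (brQ Q j g h)
        + ((-1 : ℝ) ^ ((j.val + 1) * (i.val + 1))) • brQ Q j g (brQ Q k h f)
        + ((-1 : ℝ) ^ ((k.val + 1) * (j.val + 1))) • brQ Q k h (brQ Q i f g) = 0 :=
  bracket_jacobi_general 𝒜 hscomm Q hQsmul hQodd hQleib hQ2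
end

section
/- Let A be an odd Jacobi algebra with Q a derivation of the bracket, and let s ∈ A be an even element satisfying the classical master equation [s,s] = 0. Then the classical BRST operator δ_s := X_s, defined by δ_s(g) = [s,g] - Q(s)g, is nilpotent: δ_s ∘ δ_s = 0. -/
/-- The "homological vector field" of an odd Jacobi algebra: `Q(f) = (-1)^{|f|}[f,1]`,
for `f` homogeneous of parity `i`. -/
def ojQ {A : Type*} [Ring A] [Algebra ℝ A] (br : A → A → A) (i : ZMod 2) (f : A) : A :=
  ((-1 : ℝ) ^ i.val) • br f 1

/-- The Hamiltonian vector field of `f` (of parity `i`): `X_f(g) = (-1)^{|f|}[f,g] - Q(f)g`. -/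
def ojX {A : Type*} [Ring A] [Algebra ℝ A] (br : A → A → A) (i : ZMod 2) (f g : A) : A :=
  ((-1 : ℝ) ^ i.val) • br f g - ojQ br i f * g

/-!
Write `Q = Q(s) = [s,1]` for the even Maurer–Cartan element `s`, so that `δ_s g = [s,g] - Q g`.
Expanding, `δ_s² g = [s,[s,g]] - [s,Q g] - Q [s,g] + Q² g`. The Jacobi identity with `[s,s] = 0`
gives `2[s,[s,g]] = 0`; `Q` is odd, so `Q² = 0` by supercommutativity; `Q` being a derivation of
the bracket gives `[Q,s] = [s,Q]`, while skew-symmetry gives `[Q,s] = -[s,Q]`, so `[s,Q] = 0`;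
then the Leibniz rule yields `[s,Q g] = -Q [s,g]`, and everything cancels.
-/

lemma eq_zero_of_self_eq_neg_of_module_real {M : Type*} [AddCommGroup M] [Module ℝ M] {x : M}
    (h : x = -x) : x = 0 :=
  haveI := IsAddTorsionFree.of_isTorsionFree ℝ M
  self_eq_neg.mp h

section OddJacobi

variable {A : Type*} {br : A → A → A}

lemma br_zero_left [AddGroup A] (hbraddl : ∀ f g h : A, br (f + g) h = br f h + br g h) (h : A) :
    br 0 h = 0 :=
  (AddMonoidHom.mk' (br · h) fun f g => hbraddl f g h).map_zero

lemma br_sub_right [AddGroup A] (hbraddr : ∀ f g h : A, br f (g + h) = br f g + br f h)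
    (f g h : A) : br f (g - h) = br f g - br f h :=
  (AddMonoidHom.mk' (br f) (hbraddr f)).map_sub g h

variable [Ring A] [Algebra ℝ A] {𝒜 : ZMod 2 → Submodule ℝ A}

lemma ojQ_zero (f : A) : ojQ br 0 f = br f 1 := by
  simp [ojQ]

lemma ojX_zero (f g : A) : ojX br 0 f g = br f g - ojQ br 0 f * g := by
  simp [ojX]

lemma ojQ_mem (hone : (1 : A) ∈ 𝒜 0)
    (hbrgrade : ∀ (i j : ZMod 2) (f g : A), f ∈ 𝒜 i → g ∈ 𝒜 j → br f g ∈ 𝒜 (i + j + 1))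
    {i : ZMod 2} {f : A} (hf : f ∈ 𝒜 i) : ojQ br i f ∈ 𝒜 (i + 1) := by
  simpa [ojQ] using Submodule.smul_mem _ _ (hbrgrade i 0 f 1 hf hone)

lemma mul_self_eq_zero_of_mem_odd
    (hscomm : ∀ (i j : ZMod 2) (f g : A), f ∈ 𝒜 i → g ∈ 𝒜 j →
      f * g = ((-1 : ℝ) ^ (i.val * j.val)) • (g * f))
    {f : A} (hf : f ∈ 𝒜 1) : f * f = 0 :=
  eq_zero_of_self_eq_neg_of_module_real <| by simpa [ZMod.val_one] using hscomm 1 1 f f hf hf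

variable {s : A}

lemma br_br_eq_zero_of_br_self_eq_zero
    (hbraddl : ∀ f g h : A, br (f + g) h = br f h + br g h)
    (hbrjac : ∀ (i j : ZMod 2) (f g h : A), f ∈ 𝒜 i → g ∈ 𝒜 j →
      br f (br g h) = br (br f g) h + ((-1 : ℝ) ^ ((i.val + 1) * (j.val + 1))) • br g (br f h))
    (hs : s ∈ 𝒜 0) (hmc : br s s = 0) (h : A) : br s (br s h) = 0 :=
  eq_zero_of_self_eq_neg_of_module_real <| by
    simpa [hmc, br_zero_left hbraddl] using hbrjac 0 0 s s h hs hs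

lemma br_ojQ_eq_zero_of_br_self_eq_zero
    (hbraddl : ∀ f g h : A, br (f + g) h = br f h + br g h)
    (hbrskew : ∀ (i j : ZMod 2) (f g : A), f ∈ 𝒜 i → g ∈ 𝒜 j →
      br f g = -(((-1 : ℝ) ^ ((i.val + 1) * (j.val + 1))) • br g f))
    (hQbr : ∀ (i j : ZMod 2) (f g : A), f ∈ 𝒜 i → g ∈ 𝒜 j →
      ojQ br (i + j + 1) (br f g)
        = br (ojQ br i f) g + ((-1 : ℝ) ^ (i.val + 1)) • br f (ojQ br j g))
    (hs : s ∈ 𝒜 0) (hQs : ojQ br 0 s ∈ 𝒜 1) (hmc : br s s = 0) : br s (ojQ br 0 s) = 0 := by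
  have hsymm : br (ojQ br 0 s) s = br s (ojQ br 0 s) := by
    have h := hQbr 0 0 s s hs hs
    have hQ_zero : ojQ br (0 + 0 + 1) (0 : A) = 0 := by simp [ojQ, br_zero_left hbraddl]
    rw [hmc, hQ_zero] at h
    simp only [ZMod.val_zero, zero_add, pow_one, neg_one_smul] at h
    exact add_neg_eq_zero.mp h.symm
  have hskew := hbrskew 0 1 s _ hs hQs
  exact eq_zero_of_self_eq_neg_of_module_real (by simpa [hsymm, ZMod.val_one] using hskew)

lemma br_ojQ_mul_eq_neg
    (hbrleib : ∀ (i j : ZMod 2) (f g h : A), f ∈ 𝒜 i → g ∈ 𝒜 j →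
      br f (g * h) = br f g * h + ((-1 : ℝ) ^ ((i.val + 1) * j.val)) • (g * br f h)
        - br f 1 * (g * h))
    (hs : s ∈ 𝒜 0) (hQs : ojQ br 0 s ∈ 𝒜 1) (hQQ : ojQ br 0 s * ojQ br 0 s = 0)
    (hsQ : br s (ojQ br 0 s) = 0) (g : A) :
    br s (ojQ br 0 s * g) = -(ojQ br 0 s * br s g) := by
  have h := hbrleib 0 1 s _ g hs hQs
  rw [← ojQ_zero (br := br), ← mul_assoc, hQQ, hsQ] at h
  simpa [ZMod.val_one] using h

end OddJacobi

theorem brst_nilpotent_general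
    {A : Type*} [Ring A] [Algebra ℝ A]
    (𝒜 : ZMod 2 → Submodule ℝ A)
    (hone : (1 : A) ∈ 𝒜 0)
    (hscomm : ∀ (i j : ZMod 2) (f g : A), f ∈ 𝒜 i → g ∈ 𝒜 j →
      f * g = ((-1 : ℝ) ^ (i.val * j.val)) • (g * f))
    (br : A → A → A)
    (hbraddl : ∀ f g h : A, br (f + g) h = br f h + br g h)
    (hbraddr : ∀ f g h : A, br f (g + h) = br f g + br f h)
    (hbrgrade : ∀ (i j : ZMod 2) (f g : A), f ∈ 𝒜 i → g ∈ 𝒜 j → br f g ∈ 𝒜 (i + j + 1))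
    (hbrskew : ∀ (i j : ZMod 2) (f g : A), f ∈ 𝒜 i → g ∈ 𝒜 j →
      br f g = -(((-1 : ℝ) ^ ((i.val + 1) * (j.val + 1))) • br g f))
    (hbrjac : ∀ (i j : ZMod 2) (f g h : A), f ∈ 𝒜 i → g ∈ 𝒜 j →
      br f (br g h) = br (br f g) h + ((-1 : ℝ) ^ ((i.val + 1) * (j.val + 1))) • br g (br f h))
    (hbrleib : ∀ (i j : ZMod 2) (f g h : A), f ∈ 𝒜 i → g ∈ 𝒜 j →
      br f (g * h) = br f g * h + ((-1 : ℝ) ^ ((i.val + 1) * j.val)) • (g * br f h)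
        - br f 1 * (g * h))
    (hQbr : ∀ (i j : ZMod 2) (f g : A), f ∈ 𝒜 i → g ∈ 𝒜 j →
      ojQ br (i + j + 1) (br f g)
        = br (ojQ br i f) g + ((-1 : ℝ) ^ (i.val + 1)) • br f (ojQ br j g))
    (s : A) (hs : s ∈ 𝒜 0) (hmc : br s s = 0) :
    ∀ (k : ZMod 2) (g : A), g ∈ 𝒜 k → ojX br 0 s (ojX br 0 s g) = 0 := by
  intro _ g _
  have hQs : ojQ br 0 s ∈ 𝒜 1 := by simpa using ojQ_mem hone hbrgrade hs
  have hQQ := mul_self_eq_zero_of_mem_odd hscomm hQs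
  have hsQ := br_ojQ_eq_zero_of_br_self_eq_zero hbraddl hbrskew hQbr hs hQs hmc
  rw [ojX_zero, ojX_zero, br_sub_right hbraddr,
    br_br_eq_zero_of_br_self_eq_zero hbraddl hbrjac hs hmc,
    br_ojQ_mul_eq_neg hbrleib hs hQs hQQ hsQ, mul_sub, ← mul_assoc, hQQ]
  simp

/-- The classical BRST operator `δ_s = X_s` of an even Maurer–Cartan element `s`
(`[s,s] = 0`) is nilpotent: `δ_s ∘ δ_s = 0`. -/
theorem brst_nilpotent
    {A : Type*} [Ring A] [Algebra ℝ A]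
    (𝒜 : ZMod 2 → Submodule ℝ A)
    (hone : (1 : A) ∈ 𝒜 0)
    (hmul : ∀ (i j : ZMod 2) (f g : A), f ∈ 𝒜 i → g ∈ 𝒜 j → f * g ∈ 𝒜 (i + j))
    (hscomm : ∀ (i j : ZMod 2) (f g : A), f ∈ 𝒜 i → g ∈ 𝒜 j →
      f * g = ((-1 : ℝ) ^ (i.val * j.val)) • (g * f))
    (br : A → A → A)
    (hbraddl : ∀ f g h : A, br (f + g) h = br f h + br g h)
    (hbraddr : ∀ f g h : A, br f (g + h) = br f g + br f h)
    (hbrsmull : ∀ (r : ℝ) (f g : A), br (r • f) g = r • br f g)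
    (hbrsmulr : ∀ (r : ℝ) (f g : A), br f (r • g) = r • br f g)
    (hbrgrade : ∀ (i j : ZMod 2) (f g : A), f ∈ 𝒜 i → g ∈ 𝒜 j → br f g ∈ 𝒜 (i + j + 1))
    (hbrskew : ∀ (i j : ZMod 2) (f g : A), f ∈ 𝒜 i → g ∈ 𝒜 j →
      br f g = -(((-1 : ℝ) ^ ((i.val + 1) * (j.val + 1))) • br g f))
    (hbrjac : ∀ (i j : ZMod 2) (f g h : A), f ∈ 𝒜 i → g ∈ 𝒜 j →
      br f (br g h) = br (br f g) h + ((-1 : ℝ) ^ ((i.val + 1) * (j.val + 1))) • br g (br f h))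
    (hbrleib : ∀ (i j : ZMod 2) (f g h : A), f ∈ 𝒜 i → g ∈ 𝒜 j →
      br f (g * h) = br f g * h + ((-1 : ℝ) ^ ((i.val + 1) * j.val)) • (g * br f h)
        - br f 1 * (g * h))
    (hQbr : ∀ (i j : ZMod 2) (f g : A), f ∈ 𝒜 i → g ∈ 𝒜 j →
      ojQ br (i + j + 1) (br f g)
        = br (ojQ br i f) g + ((-1 : ℝ) ^ (i.val + 1)) • br f (ojQ br j g))
    (s : A) (hs : s ∈ 𝒜 0) (hmc : br s s = 0) :
    ∀ (k : ZMod 2) (g : A), g ∈ 𝒜 k → ojX br 0 s (ojX br 0 s g) = 0 :=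
  brst_nilpotent_general 𝒜 hone hscomm br hbraddl hbraddr hbrgrade hbrskew hbrjac hbrleib hQbr s hs
    hmc
end

section
/- Let A be a ℤ₂-graded Poisson algebra with even bracket {·,·}, and let S, 𝒬 be odd elements defining an odd Jacobi structure: {𝒬,𝒬} = 0, {𝒬,S} = 0, {S,S} = -2𝒬S. Let 𝒳 be an even element with {𝒳,S} = 0 and {𝒳,𝒬} = 0 (a Jacobi vector field). Then for the odd Jacobi bracket [f,g]_J := (-1)^{|f|+1}{{S,f},g} - (-1)^{|f|+1}{𝒬,fg} on an abelian Poisson subalgebra A₀ preserved by {𝒳,·}, the operator X := {𝒳,·} is a derivation of [·,·]_J: X([f,g]_J) = [X(f),g]_J + [f,X(g)]_J for all homogeneous f, g ∈ A₀. -/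
/-! For even `𝒳` the graded Jacobi and Leibniz identities carry no signs, so `{𝒳,·}` is a
derivation of both the bracket and the product. As `{𝒳,S} = {𝒳,𝒬} = 0`, it moreover commutes with
`{S,·}` and `{𝒬,·}`, so it passes through `{{S,f},g}` and `{𝒬,fg}` as a derivation in `f` and `g`;
the odd Jacobi bracket is a linear combination of these two terms. -/

/-- The odd Jacobi bracket `[f,g]_J = (-1)^{|f|+1}({{S,f},g} - {𝒬,fg})` determined by an
odd Jacobi structure `(S,𝒬)` inside a graded Poisson algebra, for `f` of parity `i`. -/
def brJ {P : Type*} [Ring P] [Algebra ℝ P] (pb : P → P → P) (S 𝒬 : P)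
    (i : ZMod 2) (f g : P) : P :=
  ((-1 : ℝ) ^ (i.val + 1)) • (pb (pb S f) g - pb 𝒬 (f * g))

theorem pb_sub_right {P : Type*} [AddGroup P] {pb : P → P → P}
    (hpbaddr : ∀ a b c : P, pb a (b + c) = pb a b + pb a c) (a b c : P) :
    pb a (b - c) = pb a b - pb a c :=
  eq_sub_of_add_eq (by rw [← hpbaddr, sub_add_cancel])

section EvenHamiltonian

variable {P : Type*} [Ring P] [Algebra ℝ P] {Pg : ZMod 2 → Submodule ℝ P} {pb : P → P → P}
  {𝒳 : P}

theorem pb_zero_left (hpbsmull : ∀ (r : ℝ) (a b : P), pb (r • a) b = r • pb a b) (b : P) :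
    pb 0 b = 0 := by
  simpa using hpbsmull 0 0 b

theorem pb_pb_of_mem_zero
    (hpbjac : ∀ (i j : ZMod 2) (a b c : P), a ∈ Pg i → b ∈ Pg j →
      pb a (pb b c) = pb (pb a b) c + ((-1 : ℝ) ^ (i.val * j.val)) • pb b (pb a c))
    (h𝒳 : 𝒳 ∈ Pg 0) {j : ZMod 2} {a : P} (ha : a ∈ Pg j) (b : P) :
    pb 𝒳 (pb a b) = pb (pb 𝒳 a) b + pb a (pb 𝒳 b) := by
  simpa using hpbjac 0 j 𝒳 a b h𝒳 ha

theorem pb_mul_of_mem_zero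
    (hpbleib : ∀ (i j : ZMod 2) (a b c : P), a ∈ Pg i → b ∈ Pg j →
      pb a (b * c) = pb a b * c + ((-1 : ℝ) ^ (i.val * j.val)) • (b * pb a c))
    (h𝒳 : 𝒳 ∈ Pg 0) {j : ZMod 2} {a : P} (ha : a ∈ Pg j) (b : P) :
    pb 𝒳 (a * b) = pb 𝒳 a * b + a * pb 𝒳 b := by
  simpa using hpbleib 0 j 𝒳 a b h𝒳 ha

theorem pb_pb_comm_of_mem_zero
    (hpbsmull : ∀ (r : ℝ) (a b : P), pb (r • a) b = r • pb a b)
    (hpbjac : ∀ (i j : ZMod 2) (a b c : P), a ∈ Pg i → b ∈ Pg j →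
      pb a (pb b c) = pb (pb a b) c + ((-1 : ℝ) ^ (i.val * j.val)) • pb b (pb a c))
    (h𝒳 : 𝒳 ∈ Pg 0) {j : ZMod 2} {a : P} (ha : a ∈ Pg j) (h𝒳a : pb 𝒳 a = 0) (b : P) :
    pb 𝒳 (pb a b) = pb a (pb 𝒳 b) := by
  rw [pb_pb_of_mem_zero hpbjac h𝒳 ha, h𝒳a, pb_zero_left hpbsmull, zero_add]

end EvenHamiltonian

theorem jacobi_field_derivation_general
    {P : Type*} [Ring P] [Algebra ℝ P]
    (Pg : ZMod 2 → Submodule ℝ P)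
    (pb : P → P → P)
    (hpbaddr : ∀ a b c : P, pb a (b + c) = pb a b + pb a c)
    (hpbsmull : ∀ (r : ℝ) (a b : P), pb (r • a) b = r • pb a b)
    (hpbsmulr : ∀ (r : ℝ) (a b : P), pb a (r • b) = r • pb a b)
    (hpbgrade : ∀ (i j : ZMod 2) (a b : P), a ∈ Pg i → b ∈ Pg j → pb a b ∈ Pg (i + j))
    (hpbjac : ∀ (i j : ZMod 2) (a b c : P), a ∈ Pg i → b ∈ Pg j →
      pb a (pb b c) = pb (pb a b) c + ((-1 : ℝ) ^ (i.val * j.val)) • pb b (pb a c))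
    (hpbleib : ∀ (i j : ZMod 2) (a b c : P), a ∈ Pg i → b ∈ Pg j →
      pb a (b * c) = pb a b * c + ((-1 : ℝ) ^ (i.val * j.val)) • (b * pb a c))
    (S 𝒬 : P) (hS : S ∈ Pg 1) (h𝒬 : 𝒬 ∈ Pg 1)
    (A₀ : Subalgebra ℝ P)
    (𝒳 : P) (h𝒳 : 𝒳 ∈ Pg 0)
    (h𝒳S : pb 𝒳 S = 0) (h𝒳𝒬 : pb 𝒳 𝒬 = 0) :
    ∀ (i j : ZMod 2) (f g : P), f ∈ A₀ → g ∈ A₀ → f ∈ Pg i → g ∈ Pg j →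
      pb 𝒳 (brJ pb S 𝒬 i f g)
        = brJ pb S 𝒬 i (pb 𝒳 f) g + brJ pb S 𝒬 i f (pb 𝒳 g) := by
  intro i j f g _ _ hf _
  have hS_term : pb 𝒳 (pb (pb S f) g) = pb (pb S (pb 𝒳 f)) g + pb (pb S f) (pb 𝒳 g) := by
    rw [pb_pb_of_mem_zero hpbjac h𝒳 (hpbgrade 1 i S f hS hf),
      pb_pb_comm_of_mem_zero hpbsmull hpbjac h𝒳 hS h𝒳S]
  have h𝒬_term : pb 𝒳 (pb 𝒬 (f * g)) = pb 𝒬 (pb 𝒳 f * g) + pb 𝒬 (f * pb 𝒳 g) := by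
    rw [pb_pb_comm_of_mem_zero hpbsmull hpbjac h𝒳 h𝒬 h𝒳𝒬, pb_mul_of_mem_zero hpbleib h𝒳 hf,
      hpbaddr]
  simp only [brJ, hpbsmulr, pb_sub_right hpbaddr, hS_term, h𝒬_term]
  module

/-- If `𝒳` is the (even) symbol of a Jacobi vector field, i.e. `{𝒳,S} = 0` and
`{𝒳,𝒬} = 0`, then `X = {𝒳,·}` is a derivation of the odd Jacobi bracket. -/
theorem jacobi_field_derivation
    {P : Type*} [Ring P] [Algebra ℝ P]
    (Pg : ZMod 2 → Submodule ℝ P)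
    (hone : (1 : P) ∈ Pg 0)
    (hmulg : ∀ (i j : ZMod 2) (a b : P), a ∈ Pg i → b ∈ Pg j → a * b ∈ Pg (i + j))
    (hscomm : ∀ (i j : ZMod 2) (a b : P), a ∈ Pg i → b ∈ Pg j →
      a * b = ((-1 : ℝ) ^ (i.val * j.val)) • (b * a))
    (pb : P → P → P)
    (hpbaddl : ∀ a b c : P, pb (a + b) c = pb a c + pb b c)
    (hpbaddr : ∀ a b c : P, pb a (b + c) = pb a b + pb a c)
    (hpbsmull : ∀ (r : ℝ) (a b : P), pb (r • a) b = r • pb a b)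
    (hpbsmulr : ∀ (r : ℝ) (a b : P), pb a (r • b) = r • pb a b)
    (hpbgrade : ∀ (i j : ZMod 2) (a b : P), a ∈ Pg i → b ∈ Pg j → pb a b ∈ Pg (i + j))
    (hpbskew : ∀ (i j : ZMod 2) (a b : P), a ∈ Pg i → b ∈ Pg j →
      pb a b = -(((-1 : ℝ) ^ (i.val * j.val)) • pb b a))
    (hpbjac : ∀ (i j : ZMod 2) (a b c : P), a ∈ Pg i → b ∈ Pg j →
      pb a (pb b c) = pb (pb a b) c + ((-1 : ℝ) ^ (i.val * j.val)) • pb b (pb a c))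
    (hpbleib : ∀ (i j : ZMod 2) (a b c : P), a ∈ Pg i → b ∈ Pg j →
      pb a (b * c) = pb a b * c + ((-1 : ℝ) ^ (i.val * j.val)) • (b * pb a c))
    (S 𝒬 : P) (hS : S ∈ Pg 1) (h𝒬 : 𝒬 ∈ Pg 1)
    (h𝒬𝒬 : pb 𝒬 𝒬 = 0) (h𝒬S : pb 𝒬 S = 0)
    (hSS : pb S S = -((2 : ℝ) • (𝒬 * S)))
    (A₀ : Subalgebra ℝ P)
    (habelian : ∀ f g : P, f ∈ A₀ → g ∈ A₀ → pb f g = 0)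
    (h𝒬cl : ∀ f : P, f ∈ A₀ → pb 𝒬 f ∈ A₀)
    (hScl : ∀ f g : P, f ∈ A₀ → g ∈ A₀ → pb (pb S f) g ∈ A₀)
    (𝒳 : P) (h𝒳 : 𝒳 ∈ Pg 0)
    (h𝒳S : pb 𝒳 S = 0) (h𝒳𝒬 : pb 𝒳 𝒬 = 0)
    (h𝒳cl : ∀ f : P, f ∈ A₀ → pb 𝒳 f ∈ A₀) :
    ∀ (i j : ZMod 2) (f g : P), f ∈ A₀ → g ∈ A₀ → f ∈ Pg i → g ∈ Pg j →
      pb 𝒳 (brJ pb S 𝒬 i f g)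
        = brJ pb S 𝒬 i (pb 𝒳 f) g + brJ pb S 𝒬 i f (pb 𝒳 g) :=
  jacobi_field_derivation_general Pg pb hpbaddr hpbsmull hpbsmulr hpbgrade hpbjac hpbleib S 𝒬 hS h𝒬
    A₀ 𝒳 h𝒳 h𝒳S h𝒳𝒬
end
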